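/- Let K ⊆ ℝ^d be a compact set with |K| > 0 and let {B_j}_{j≥0} be a hierarchical partition of K, with associated framelets ψ_{j,B}^{(ℓ_1,ℓ_2)}. For j ≥ 0 let V_j = span{χ_B : B ∈ B_j} and W_j = span{ψ_{j,B}^{(ℓ_1,ℓ_2)} : B ∈ B_j, 1 ≤ ℓ_1 < ℓ_2 ≤ c_B} in L²(K). Then V_j ⊥ W_j and V_{j+1} = V_j ⊕ W_j (orthogonal direct sum) for every j ≥ 0. -/

import Mathlib

open MeasureTheory Filter

/-- A hierarchical partition of a set `K`. -/
structure HierarchicalPartition (X : Type*) [MeasureSpace X] [PseudoEMetricSpace X]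
    (K : Set X) where
  part : ℕ → Finset (Set X)
  root : part 0 = {K}
  cover : ∀ j : ℕ, ⋃ B ∈ part j, B = K
  measurableSet : ∀ j : ℕ, ∀ B ∈ part j, MeasurableSet B
  pos : ∀ j : ℕ, ∀ B ∈ part j, 0 < volume B
  null_inter : ∀ j : ℕ, ∀ B ∈ part j, ∀ B' ∈ part j, B ≠ B' → volume (B ∩ B') = 0
  numChild : ℕ → Set X → ℕ
  child : ℕ → Set X → ℕ → Set X
  one_le_numChild : ∀ j : ℕ, ∀ B ∈ part j, 1 ≤ numChild j B
  child_mem : ∀ j : ℕ, ∀ B ∈ part j, ∀ ℓ < numChild j B, child j B ℓ ∈ part (j + 1)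
  child_ne : ∀ j : ℕ, ∀ B ∈ part j, ∀ ℓ₁ < numChild j B, ∀ ℓ₂ < numChild j B,
    ℓ₁ ≠ ℓ₂ → child j B ℓ₁ ≠ child j B ℓ₂
  child_union : ∀ j : ℕ, ∀ B ∈ part j, B = ⋃ ℓ ∈ Finset.range (numChild j B), child j B ℓ
  density : Tendsto (fun j : ℕ => (part j).sup fun B => EMetric.diam B) atTop (nhds 0)

/-- `γ_C = χ_C / √|C|`. -/
noncomputable def gammaFn {X : Type*} [MeasureSpace X] (C : Set X) : X → ℝ :=
  C.indicator fun _ => (Real.sqrt (volume C).toReal)⁻¹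

/-- `ψ^{(C,C')} = √(|C'|/|B|) γ_C − √(|C|/|B|) γ_{C'}` for sub-blocks `C, C'` of `B`. -/
noncomputable def psiFn {X : Type*} [MeasureSpace X] (B C C' : Set X) : X → ℝ :=
  fun x =>
    Real.sqrt ((volume C').toReal / (volume B).toReal) * gammaFn C x -
      Real.sqrt ((volume C).toReal / (volume B).toReal) * gammaFn C' x

/-- `V_j = span{χ_B : B ∈ B_j}`, viewed inside `L²(K)`. -/
noncomputable def Vspace {X : Type*} [MeasureSpace X] [PseudoEMetricSpace X] {K : Set X}
    (P : HierarchicalPartition X K) (j : ℕ) :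
    Submodule ℝ (Lp ℝ 2 (volume.restrict K)) :=
  Submodule.span ℝ
    {g : Lp ℝ 2 (volume.restrict K) |
      ∃ B ∈ P.part j, (g : X → ℝ) =ᵐ[volume.restrict K] B.indicator fun _ => (1 : ℝ)}

/-- `W_j = span{ψ_{j,B}^{(ℓ₁,ℓ₂)} : B ∈ B_j, 1 ≤ ℓ₁ < ℓ₂ ≤ c_B}`, viewed inside `L²(K)`
(children indexed from `0`, so the pairs are `ℓ₁ < ℓ₂ < c_B`). -/
noncomputable def Wspace {X : Type*} [MeasureSpace X] [PseudoEMetricSpace X] {K : Set X}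
    (P : HierarchicalPartition X K) (j : ℕ) :
    Submodule ℝ (Lp ℝ 2 (volume.restrict K)) :=
  Submodule.span ℝ
    {g : Lp ℝ 2 (volume.restrict K) |
      ∃ B ∈ P.part j, ∃ ℓ₁ ℓ₂ : ℕ, ℓ₁ < ℓ₂ ∧ ℓ₂ < P.numChild j B ∧
        (g : X → ℝ) =ᵐ[volume.restrict K] psiFn B (P.child j B ℓ₁) (P.child j B ℓ₂)}

/-!
Inside a block `B` with children `C_ℓ` and weights `b_ℓ = |C_ℓ|/|B|`, the framelet `ψ^{(k,ℓ)}`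
is a positive multiple of `b_ℓ χ_{C_k} − b_k χ_{C_ℓ}`. Its inner product with `χ_B` is thus a
multiple of `b_ℓ |C_k| − b_k |C_ℓ| = 0`, and with the indicator of any other block of level `j`
it vanishes because distinct blocks meet in null sets; hence `V_j ⟂ W_j`. Summing over `ℓ`,
with `∑ b_ℓ = 1` and `∑ χ_{C_ℓ} = χ_B` in `L²`, gives
`χ_{C_k} = b_k χ_B + ∑_ℓ (b_ℓ χ_{C_k} − b_k χ_{C_ℓ})`, so `V_{j+1} ≤ V_j ⊔ W_j`; the reverse
inclusion holds because `χ_B = ∑ χ_{C_ℓ}` and each `ψ` is a combination of children's indicators.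
-/

open Function
open scoped InnerProductSpace

namespace MeasureTheory

variable {X : Type*} [MeasurableSpace X] (μ : Measure X) [IsFiniteMeasure μ]

noncomputable def chiLp {s : Set X} (hs : MeasurableSet s) : Lp ℝ 2 μ :=
  indicatorConstLp 2 hs (measure_ne_top μ s) 1

/-- The framelet `ψ^{(s,t)} = √(|t|/|B|) γ_s − √(|s|/|B|) γ_t` of the parent `B` in `L²(μ)`. -/
noncomputable def psiLp (B : Set X) {s t : Set X} (hs : MeasurableSet s)
    (ht : MeasurableSet t) : Lp ℝ 2 μ :=
  (√(μ.real t / μ.real B) * (√(μ.real s))⁻¹) • chiLp μ hs -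
    (√(μ.real s / μ.real B) * (√(μ.real t))⁻¹) • chiLp μ ht

variable {μ} {s t A B : Set X}

theorem chiLp_congr (h : s = t) (hs : MeasurableSet s) (ht : MeasurableSet t) :
    chiLp μ hs = chiLp μ ht := by
  subst h; rfl

theorem chiLp_empty : chiLp μ MeasurableSet.empty = 0 :=
  indicatorConstLp_empty

theorem chiLp_union (hs : MeasurableSet s) (ht : MeasurableSet t) (hst : AEDisjoint μ s t) :
    chiLp μ (hs.union ht) = chiLp μ hs + chiLp μ ht := by
  ext1
  filter_upwards [Lp.coeFn_add (chiLp μ hs) (chiLp μ ht),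
    indicatorConstLp_coeFn (hs := hs.union ht) (c := (1 : ℝ)),
    indicatorConstLp_coeFn (hs := hs) (c := (1 : ℝ)),
    indicatorConstLp_coeFn (hs := ht) (c := (1 : ℝ)),
    measure_eq_zero_iff_ae_notMem.mp hst.eq] with x hadd hst' hs' ht' hx
  rw [hadd, Pi.add_apply, chiLp, chiLp, chiLp, hst', hs', ht',
    Set.indicator_union_of_notMem_inter hx]

theorem chiLp_biUnion_finset {ι : Type*} {C : ι → Set X} (hC : ∀ i, MeasurableSet (C i))
    (S : Finset ι) (hd : (S : Set ι).Pairwise (AEDisjoint μ on C)) :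
    chiLp μ (S.measurableSet_biUnion fun i _ => hC i) = ∑ i ∈ S, chiLp μ (hC i) := by
  classical
  induction S using Finset.induction_on with
  | empty => simpa using chiLp_empty
  | insert a S ha ih =>
    have hdisj : AEDisjoint μ (C a) (⋃ i ∈ S, C i) :=
      Set.biUnion_eq_iUnion (S : Set ι) (fun i _ => C i) ▸ AEDisjoint.iUnion_right_iff.mpr
        fun i => hd (by simp) (by simp) (ne_of_mem_of_not_mem i.2 ha).symm
    rw [Finset.sum_insert ha, ← ih (hd.mono (by simp)), ← chiLp_union _ _ hdisj]
    exact chiLp_congr (Finset.set_biUnion_insert a S C) _ _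

theorem chiLp_iUnion {ι : Type*} [Fintype ι] {C : ι → Set X} (hC : ∀ i, MeasurableSet (C i))
    (hd : Pairwise (AEDisjoint μ on C)) :
    chiLp μ (MeasurableSet.iUnion hC) = ∑ i, chiLp μ (hC i) := by
  rw [← chiLp_biUnion_finset hC _ (hd.set_pairwise _)]
  exact chiLp_congr (by simp) _ _

theorem inner_chiLp_chiLp (hs : MeasurableSet s) (ht : MeasurableSet t) :
    ⟪chiLp μ hs, chiLp μ ht⟫_ℝ = μ.real (s ∩ t) :=
  L2.real_inner_indicatorConstLp_one_indicatorConstLp_one hs ht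

theorem inner_chiLp_psiLp_of_subset (hB : MeasurableSet B) (hs : MeasurableSet s)
    (ht : MeasurableSet t) (hsB : s ⊆ B) (htB : t ⊆ B) :
    ⟪chiLp μ hB, psiLp μ B hs ht⟫_ℝ = 0 := by
  rw [psiLp, inner_sub_right, real_inner_smul_right, real_inner_smul_right, inner_chiLp_chiLp,
    inner_chiLp_chiLp, Set.inter_eq_right.mpr hsB, Set.inter_eq_right.mpr htB, mul_assoc,
    mul_assoc, inv_mul_eq_div, inv_mul_eq_div, Real.div_sqrt, Real.div_sqrt,
    ← Real.sqrt_mul (by positivity), ← Real.sqrt_mul (by positivity), div_mul_eq_mul_div,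
    div_mul_eq_mul_div, mul_comm, sub_self]

theorem inner_chiLp_psiLp_of_aedisjoint (hA : MeasurableSet A) (hs : MeasurableSet s)
    (ht : MeasurableSet t) (hAs : AEDisjoint μ A s) (hAt : AEDisjoint μ A t) :
    ⟪chiLp μ hA, psiLp μ B hs ht⟫_ℝ = 0 := by
  rw [psiLp, inner_sub_right, real_inner_smul_right, real_inner_smul_right, inner_chiLp_chiLp,
    inner_chiLp_chiLp]
  simp [measureReal_def, hAs.eq, hAt.eq]

theorem psiLp_swap (hs : MeasurableSet s) (ht : MeasurableSet t) :
    psiLp μ B hs ht = -psiLp μ B ht hs := by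
  rw [psiLp, psiLp, neg_sub]

theorem psiLp_self (hs : MeasurableSet s) : psiLp μ B hs hs = 0 :=
  sub_self _

theorem smul_psiLp (hs : MeasurableSet s) (ht : MeasurableSet t) (hs₀ : 0 < μ.real s)
    (ht₀ : 0 < μ.real t) (hB₀ : 0 < μ.real B) :
    (√(μ.real s) * √(μ.real t) / √(μ.real B)) • psiLp μ B hs ht =
      (μ.real t / μ.real B) • chiLp μ hs - (μ.real s / μ.real B) • chiLp μ ht := by
  have hcoeff : ∀ {a b : ℝ}, 0 < a → 0 < b →
      √a * √b / √(μ.real B) * (√(b / μ.real B) * (√a)⁻¹) = b / μ.real B := by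
    intro a b ha hb
    rw [Real.sqrt_div hb.le]
    field_simp
    rw [Real.sq_sqrt hb.le, Real.sq_sqrt hB₀.le, mul_comm]
  rw [psiLp, smul_sub, smul_smul, smul_smul, hcoeff hs₀ ht₀, mul_comm √(μ.real s), hcoeff ht₀ hs₀]

theorem chiLp_eq_smul_add_sum_smul_psiLp {ι : Type*} [Fintype ι] {C : ι → Set X}
    (hC : ∀ i, MeasurableSet (C i)) (hd : Pairwise (AEDisjoint μ on C))
    (hpos : ∀ i, 0 < μ.real (C i)) (hB : MeasurableSet B) (hCB : ⋃ i, C i = B) (k : ι) :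
    chiLp μ (hC k) = (μ.real (C k) / μ.real B) • chiLp μ hB +
      ∑ ℓ, (√(μ.real (C k)) * √(μ.real (C ℓ)) / √(μ.real B)) • psiLp μ B (hC k) (hC ℓ) := by
  have hchi : chiLp μ hB = ∑ ℓ, chiLp μ (hC ℓ) :=
    (chiLp_congr hCB.symm _ _).trans (chiLp_iUnion hC hd)
  have hreal : μ.real B = ∑ ℓ, μ.real (C ℓ) := by
    rw [← hCB, ← measureReal_biUnion_finset₀ (hd.set_pairwise _)
      (fun i _ => (hC i).nullMeasurableSet)]
    simp
  have hB₀ : 0 < μ.real B := hreal ▸ Finset.sum_pos (fun i _ => hpos i) ⟨k, Finset.mem_univ k⟩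
  rw [Finset.sum_congr rfl fun ℓ _ => smul_psiLp (hC k) (hC ℓ) (hpos k) (hpos ℓ) hB₀,
    Finset.sum_sub_distrib, ← Finset.sum_smul, ← Finset.smul_sum, ← hchi, ← Finset.sum_div,
    ← hreal, div_self hB₀.ne', one_smul]
  abel

end MeasureTheory

theorem psiFn_ae_eq_psiLp {X : Type*} [MeasureSpace X] {K B s t : Set X}
    [IsFiniteMeasure (volume.restrict K)] (hBK : B ⊆ K) (hs : MeasurableSet s) (hsK : s ⊆ K)
    (ht : MeasurableSet t) (htK : t ⊆ K) :
    psiFn B s t =ᵐ[volume.restrict K] psiLp (volume.restrict K) B hs ht := by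
  have hreal : ∀ {u : Set X}, u ⊆ K → (volume.restrict K).real u = (volume u).toReal :=
    fun hu => by rw [measureReal_def, Measure.restrict_eq_self _ hu]
  unfold psiLp
  refine EventuallyEq.symm ((Lp.coeFn_sub _ _).trans ?_)
  filter_upwards [Lp.coeFn_smul (𝕜 := ℝ) _ (chiLp (volume.restrict K) hs),
    Lp.coeFn_smul (𝕜 := ℝ) _ (chiLp (volume.restrict K) ht),
    indicatorConstLp_coeFn (hs := hs) (c := (1 : ℝ)),
    indicatorConstLp_coeFn (hs := ht) (c := (1 : ℝ))] with x hχs hχt hs' ht'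
  rw [Pi.sub_apply, hχs, hχt, Pi.smul_apply, Pi.smul_apply, chiLp, chiLp, hs', ht', hreal hBK,
    hreal hsK, hreal htK]
  simp only [psiFn, gammaFn, smul_eq_mul]
  by_cases hxs : x ∈ s <;> by_cases hxt : x ∈ t <;> simp [hxs, hxt]

namespace HierarchicalPartition

variable {X : Type*} [MeasureSpace X] [PseudoEMetricSpace X] {K : Set X}
  (P : HierarchicalPartition X K) {j : ℕ} {B C : Set X}

theorem subset_of_mem_part (hB : B ∈ P.part j) : B ⊆ K := by
  rw [← P.cover j]
  exact Finset.subset_set_biUnion_of_mem (f := id) hB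

theorem child_subset (hB : B ∈ P.part j) {ℓ : ℕ} (hℓ : ℓ < P.numChild j B) :
    P.child j B ℓ ⊆ B := by
  conv_rhs => rw [P.child_union j B hB]
  exact Finset.subset_set_biUnion_of_mem (Finset.mem_range.mpr hℓ)

theorem measurableSet_child (hB : B ∈ P.part j) {ℓ : ℕ} (hℓ : ℓ < P.numChild j B) :
    MeasurableSet (P.child j B ℓ) :=
  P.measurableSet _ _ (P.child_mem j B hB ℓ hℓ)

theorem iUnion_child (hB : B ∈ P.part j) :
    ⋃ ℓ : Fin (P.numChild j B), P.child j B ℓ = B := by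
  conv_rhs => rw [P.child_union j B hB]
  ext x
  simp [Fin.exists_iff]

theorem aedisjoint {B' : Set X} (hB : B ∈ P.part j) (hB' : B' ∈ P.part j) (hne : B ≠ B') :
    AEDisjoint (volume.restrict K) B B' :=
  nonpos_iff_eq_zero.mp
    ((Measure.restrict_apply_le K _).trans_eq (P.null_inter j B hB B' hB' hne))

theorem pairwise_aedisjoint_child (hB : B ∈ P.part j) :
    Pairwise (AEDisjoint (volume.restrict K) on fun ℓ : Fin (P.numChild j B) => P.child j B ℓ) :=
  fun ℓ ℓ' hne =>
  P.aedisjoint (P.child_mem j B hB ℓ ℓ.2) (P.child_mem j B hB ℓ' ℓ'.2)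
    (P.child_ne j B hB ℓ ℓ.2 ℓ' ℓ'.2 (Fin.val_ne_of_ne hne))

theorem measureReal_restrict_pos [IsFiniteMeasure (volume.restrict K)] (hB : B ∈ P.part j) :
    0 < (volume.restrict K).real B := by
  have hBK := Measure.restrict_eq_self volume (P.subset_of_mem_part hB)
  rw [measureReal_def, hBK]
  exact ENNReal.toReal_pos (P.pos j B hB).ne' (hBK ▸ measure_ne_top _ B)

theorem exists_child_eq (hC : C ∈ P.part (j + 1)) :
    ∃ B ∈ P.part j, ∃ k < P.numChild j B, P.child j B k = C := by
  by_contra! hne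
  have hnull : ∀ B ∈ P.part j, ∀ ℓ ∈ Finset.range (P.numChild j B),
      volume (C ∩ P.child j B ℓ) = 0 := fun B hB ℓ hℓ =>
    P.null_inter _ C hC _ (P.child_mem j B hB ℓ (Finset.mem_range.mp hℓ))
      (hne B hB ℓ (Finset.mem_range.mp hℓ)).symm
  have hC_eq : C = ⋃ B ∈ P.part j, ⋃ ℓ ∈ Finset.range (P.numChild j B), C ∩ P.child j B ℓ := by
    conv_lhs => rw [← Set.inter_eq_left.mpr (P.subset_of_mem_part hC), ← P.cover j,
      Set.inter_iUnion₂]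
    refine Set.iUnion₂_congr fun B hB => ?_
    rw [← Set.inter_iUnion₂, ← P.child_union j B hB]
  refine (P.pos _ C hC).ne' ?_
  rw [hC_eq]
  exact (measure_biUnion_null_iff (P.part j).countable_toSet).mpr fun B hB =>
    (measure_biUnion_null_iff (Finset.countable_toSet _)).mpr (hnull B hB)

variable [IsFiniteMeasure (volume.restrict K)]

theorem chiLp_mem_Vspace (hB : B ∈ P.part j) :
    chiLp (volume.restrict K) (P.measurableSet j B hB) ∈ Vspace P j :=
  Submodule.subset_span ⟨B, hB, indicatorConstLp_coeFn⟩

theorem Vspace_le {Q : Submodule ℝ (Lp ℝ 2 (volume.restrict K))}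
    (h : ∀ B (hB : B ∈ P.part j), chiLp (volume.restrict K) (P.measurableSet j B hB) ∈ Q) :
    Vspace P j ≤ Q := by
  rw [Vspace, Submodule.span_le]
  rintro g ⟨B, hB, hg⟩
  obtain rfl : g = chiLp _ (P.measurableSet j B hB) :=
    Lp.ext (hg.trans indicatorConstLp_coeFn.symm)
  exact h B hB

theorem psiLp_child_mem_Wspace (hB : B ∈ P.part j) {k ℓ : ℕ} (hk : k < P.numChild j B)
    (hℓ : ℓ < P.numChild j B) :
    psiLp (volume.restrict K) B (P.measurableSet_child hB hk) (P.measurableSet_child hB hℓ) ∈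
      Wspace P j := by
  have hmem : ∀ {k ℓ : ℕ} (hk : k < P.numChild j B) (hℓ : ℓ < P.numChild j B), k < ℓ →
      psiLp (volume.restrict K) B (P.measurableSet_child hB hk) (P.measurableSet_child hB hℓ) ∈
        Wspace P j := fun hk hℓ hkℓ =>
    Submodule.subset_span ⟨B, hB, _, _, hkℓ, hℓ, (psiFn_ae_eq_psiLp (P.subset_of_mem_part hB) _
      (P.subset_of_mem_part (P.child_mem j B hB _ hk)) _
      (P.subset_of_mem_part (P.child_mem j B hB _ hℓ))).symm⟩
  rcases lt_trichotomy k ℓ with hkℓ | rfl | hℓk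
  · exact hmem hk hℓ hkℓ
  · rw [psiLp_self]
    exact zero_mem _
  · rw [psiLp_swap]
    exact neg_mem (hmem hℓ hk hℓk)

theorem Wspace_le {Q : Submodule ℝ (Lp ℝ 2 (volume.restrict K))}
    (h : ∀ B (hB : B ∈ P.part j) ℓ₁ ℓ₂ (h₁ : ℓ₁ < P.numChild j B) (h₂ : ℓ₂ < P.numChild j B),
      psiLp (volume.restrict K) B (P.measurableSet_child hB h₁) (P.measurableSet_child hB h₂) ∈ Q) :
    Wspace P j ≤ Q := by
  rw [Wspace, Submodule.span_le]
  rintro g ⟨B, hB, ℓ₁, ℓ₂, h₁₂, h₂, hg⟩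
  have h₁ := h₁₂.trans h₂
  obtain rfl : g = psiLp _ B (P.measurableSet_child hB h₁) (P.measurableSet_child hB h₂) :=
    Lp.ext (hg.trans (psiFn_ae_eq_psiLp (P.subset_of_mem_part hB) _
      (P.subset_of_mem_part (P.child_mem j B hB _ h₁)) _
      (P.subset_of_mem_part (P.child_mem j B hB _ h₂))))
  exact h B hB ℓ₁ ℓ₂ h₁ h₂

theorem Vspace_isOrtho_Wspace : Vspace P j ⟂ Wspace P j := by
  rw [Submodule.isOrtho_iff_le]
  refine P.Vspace_le fun A hA => ?_
  rw [← Submodule.span_singleton_le_iff_mem]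
  refine Submodule.IsOrtho.symm (P.Wspace_le fun B hB ℓ₁ ℓ₂ h₁ h₂ => ?_)
  rw [Submodule.mem_orthogonal_singleton_iff_inner_right]
  by_cases hAB : A = B
  · subst hAB
    exact inner_chiLp_psiLp_of_subset _ _ _ (P.child_subset hA h₁) (P.child_subset hA h₂)
  · have hdisj := P.aedisjoint hA hB hAB
    exact inner_chiLp_psiLp_of_aedisjoint _ _ _ (hdisj.mono subset_rfl (P.child_subset hB h₁))
      (hdisj.mono subset_rfl (P.child_subset hB h₂))

theorem Vspace_le_Vspace_succ : Vspace P j ≤ Vspace P (j + 1) :=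
  P.Vspace_le fun B hB => by
    rw [chiLp_congr (P.iUnion_child hB).symm _
        (MeasurableSet.iUnion fun ℓ => P.measurableSet_child hB ℓ.2),
      chiLp_iUnion (fun ℓ => P.measurableSet_child hB ℓ.2) (P.pairwise_aedisjoint_child hB)]
    exact Submodule.sum_mem _ fun ℓ _ => P.chiLp_mem_Vspace (P.child_mem j B hB ℓ ℓ.2)

theorem Wspace_le_Vspace_succ : Wspace P j ≤ Vspace P (j + 1) :=
  P.Wspace_le fun B hB ℓ₁ ℓ₂ h₁ h₂ =>
    sub_mem (Submodule.smul_mem _ _ (P.chiLp_mem_Vspace (P.child_mem j B hB ℓ₁ h₁)))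
      (Submodule.smul_mem _ _ (P.chiLp_mem_Vspace (P.child_mem j B hB ℓ₂ h₂)))

theorem Vspace_succ_le_sup : Vspace P (j + 1) ≤ Vspace P j ⊔ Wspace P j := by
  refine P.Vspace_le fun C hC => ?_
  obtain ⟨B, hB, k, hk, rfl⟩ := P.exists_child_eq hC
  have hmeas (ℓ : Fin (P.numChild j B)) : MeasurableSet (P.child j B ℓ) :=
    P.measurableSet_child hB ℓ.2
  suffices h : chiLp (volume.restrict K) (hmeas ⟨k, hk⟩) ∈ Vspace P j ⊔ Wspace P j from h
  rw [chiLp_eq_smul_add_sum_smul_psiLp hmeas (P.pairwise_aedisjoint_child hB)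
    (fun ℓ => P.measureReal_restrict_pos (P.child_mem j B hB ℓ ℓ.2)) (P.measurableSet j B hB)
    (P.iUnion_child hB)]
  exact add_mem (Submodule.mem_sup_left (Submodule.smul_mem _ _ (P.chiLp_mem_Vspace hB)))
    (Submodule.sum_mem _ fun ℓ _ =>
      Submodule.mem_sup_right (Submodule.smul_mem _ _ (P.psiLp_child_mem_Wspace hB hk ℓ.2)))

end HierarchicalPartition

theorem Vspace_succ_eq_orthogonal_direct_sum_general
    {d : ℕ} (K : Set (Fin d → ℝ)) (hK : IsCompact K)
    (P : HierarchicalPartition (Fin d → ℝ) K) (j : ℕ) :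
    (∀ u ∈ Vspace P j, ∀ w ∈ Wspace P j, (inner ℝ u w : ℝ) = 0) ∧
      Vspace P (j + 1) = Vspace P j ⊔ Wspace P j ∧ Vspace P j ⊓ Wspace P j = ⊥ := by
  have : IsFiniteMeasure (volume.restrict K) := isFiniteMeasure_restrict.mpr hK.measure_lt_top.ne
  have hortho : Vspace P j ⟂ Wspace P j := P.Vspace_isOrtho_Wspace
  exact ⟨fun u hu w hw => hortho.inner_eq hu hw,
    le_antisymm P.Vspace_succ_le_sup (sup_le P.Vspace_le_Vspace_succ P.Wspace_le_Vspace_succ),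
    disjoint_iff.mp hortho.disjoint⟩

/-- `V_j ⊥ W_j` and `V_{j+1} = V_j ⊕ W_j` (orthogonal direct sum, i.e.
`V_{j+1} = V_j ⊔ W_j` and `V_j ⊓ W_j = ⊥`) for every `j ≥ 0`. -/
theorem Vspace_succ_eq_orthogonal_direct_sum
    {d : ℕ} (K : Set (Fin d → ℝ)) (hK : IsCompact K) (hKpos : 0 < volume K)
    (P : HierarchicalPartition (Fin d → ℝ) K) (j : ℕ) :
    (∀ u ∈ Vspace P j, ∀ w ∈ Wspace P j, (inner ℝ u w : ℝ) = 0) ∧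
      Vspace P (j + 1) = Vspace P j ⊔ Wspace P j ∧ Vspace P j ⊓ Wspace P j = ⊥ :=
  Vspace_succ_eq_orthogonal_direct_sum_general K hK P j
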